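/- arXiv:2408.05651 — 3 statements merged into one kernel-verified Lean document; each statement's English description precedes it below -/
import Mathlib

section
/- For λ ∈ [-1/2, 1], the function h : ℝ² → [0,∞) defined by h(x₁,x₂) = |x| + λ x₁²/|x| for x ≠ 0 and h(0) = 0 is convex. -/
/-!
For a linear functional `φ` with `|φ x| ≤ ‖x‖`, the function `g x = ‖x‖ + φ x ^ 2 / ‖x‖` is
positively homogeneous and subadditive, hence convex. Subadditivity combines the monotonicity of
`t ↦ t + m / t` on `[√m, ∞)` (applied with `t = ‖x‖ + ‖y‖ ≥ ‖x + y‖ ≥ |φ (x + y)|`) with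
Sedrakyan's inequality `(a + c)² / (u + v) ≤ a² / u + c² / v`.
For `0 ≤ λ ≤ 1`, `h = (1 - λ) ‖x‖ + λ g` with `φ = x₀`; for `-1/2 ≤ λ < 0`, the identity
`x₀² = ‖x‖² - x₁²` gives `h = (1 + 2λ) ‖x‖ + (-λ) g` with `φ = x₁`. Both are nonnegative
combinations of convex functions.
-/

open Set

theorem convexOn_univ_of_subadditive_of_smul {𝕜 E β : Type*} [Semiring 𝕜] [PartialOrder 𝕜]
    [IsOrderedRing 𝕜] [AddCommMonoid E] [Module 𝕜 E] [AddCommMonoid β] [PartialOrder β]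
    [SMul 𝕜 β] {f : E → β} (hadd : ∀ x y, f (x + y) ≤ f x + f y)
    (hsmul : ∀ t : 𝕜, 0 ≤ t → ∀ x, f (t • x) = t • f x) :
    ConvexOn 𝕜 univ f :=
  ⟨convex_univ, fun x _ y _ a b ha hb _ ↦ by
    simpa only [hsmul a ha, hsmul b hb] using hadd (a • x) (b • y)⟩

theorem add_div_le_add_div_of_sq_le {m w t : ℝ} (hw : 0 < w) (hm : m ≤ w ^ 2) (hwt : w ≤ t) :
    w + m / w ≤ t + m / t := by
  have ht : 0 < t := hw.trans_le hwt
  rw [← sub_nonneg]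
  have key : t + m / t - (w + m / w) = (t - w) * (w * t - m) / (w * t) := by
    field_simp
    ring
  rw [key]
  have : w ^ 2 ≤ w * t := by nlinarith
  exact div_nonneg (mul_nonneg (by linarith) (by linarith)) (by positivity)

theorem add_sq_div_add_le {a c u v : ℝ} (hu : 0 < u) (hv : 0 < v) :
    (a + c) ^ 2 / (u + v) ≤ a ^ 2 / u + c ^ 2 / v := by
  simpa [Fin.sum_univ_two] using
    Finset.sq_sum_div_le_sum_sq_div Finset.univ ![a, c] (g := ![u, v])
      (by simp [Fin.forall_fin_two, hu, hv])

section

variable {E : Type*} [NormedAddCommGroup E] [NormedSpace ℝ E] (φ : E →ₗ[ℝ] ℝ)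

theorem norm_add_sq_div_norm_smul {t : ℝ} (ht : 0 ≤ t) (x : E) :
    ‖t • x‖ + φ (t • x) ^ 2 / ‖t • x‖ = t * (‖x‖ + φ x ^ 2 / ‖x‖) := by
  rw [norm_smul, Real.norm_of_nonneg ht, map_smul, smul_eq_mul]
  rcases ht.eq_or_lt with rfl | ht
  · simp
  · rw [mul_pow, sq t, mul_assoc, mul_div_mul_left _ _ ht.ne', mul_div_assoc, mul_add]

theorem norm_add_sq_div_norm_add_le (hφ : ∀ x, |φ x| ≤ ‖x‖) (x y : E) :
    ‖x + y‖ + φ (x + y) ^ 2 / ‖x + y‖ ≤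
      (‖x‖ + φ x ^ 2 / ‖x‖) + (‖y‖ + φ y ^ 2 / ‖y‖) := by
  rcases eq_or_ne x 0 with rfl | hx
  · simp
  rcases eq_or_ne y 0 with rfl | hy
  · simp
  rcases (norm_nonneg (x + y)).eq_or_lt with hxy | hxy
  · rw [← hxy]
    simp only [zero_add, div_zero]
    positivity
  calc ‖x + y‖ + φ (x + y) ^ 2 / ‖x + y‖
      ≤ (‖x‖ + ‖y‖) + (φ x + φ y) ^ 2 / (‖x‖ + ‖y‖) := by
        rw [map_add]
        refine add_div_le_add_div_of_sq_le hxy ?_ (norm_add_le x y)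
        rw [← map_add, ← sq_abs]
        exact pow_le_pow_left₀ (abs_nonneg _) (hφ _) 2
    _ ≤ (‖x‖ + φ x ^ 2 / ‖x‖) + (‖y‖ + φ y ^ 2 / ‖y‖) := by
        linarith [add_sq_div_add_le (a := φ x) (c := φ y) (norm_pos_iff.2 hx) (norm_pos_iff.2 hy)]

theorem convexOn_norm_add_sq_div_norm (hφ : ∀ x, |φ x| ≤ ‖x‖) :
    ConvexOn ℝ univ fun x : E ↦ ‖x‖ + φ x ^ 2 / ‖x‖ :=
  convexOn_univ_of_subadditive_of_smul (norm_add_sq_div_norm_add_le φ hφ)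
    fun _ ht x ↦ norm_add_sq_div_norm_smul φ ht x

end

theorem convexOn_norm_add_sq_apply_div_norm {ι : Type*} [Fintype ι] (i : ι) :
    ConvexOn ℝ univ fun x : EuclideanSpace ℝ ι ↦ ‖x‖ + x i ^ 2 / ‖x‖ :=
  convexOn_norm_add_sq_div_norm (EuclideanSpace.proj i : EuclideanSpace ℝ ι →L[ℝ] ℝ).toLinearMap
    fun x ↦ PiLp.norm_apply_le x i

/-- For λ ∈ [-1/2, 1], the function h : ℝ² → [0,∞) given by
h(x) = |x| + λ x₁²/|x| for x ≠ 0 and h(0) = 0 (the formula below yields 0 at 0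
since division by zero is 0) is convex. -/
theorem convexity_of_h (l : ℝ) (hl1 : -(1/2) ≤ l) (hl2 : l ≤ 1) :
    ConvexOn ℝ Set.univ
      (fun x : EuclideanSpace ℝ (Fin 2) => ‖x‖ + l * (x 0)^2 / ‖x‖) := by
  rcases le_or_gt 0 l with hl | hl
  · refine ((convexOn_univ_norm.smul (sub_nonneg.2 hl2)).add
      ((convexOn_norm_add_sq_apply_div_norm (0 : Fin 2)).smul hl)).congr fun x _ ↦ ?_
    simp only [Pi.add_apply, smul_eq_mul]
    ring
  · refine ((convexOn_univ_norm.smul (by linarith : 0 ≤ 1 + 2 * l)).add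
      ((convexOn_norm_add_sq_apply_div_norm (1 : Fin 2)).smul (neg_nonneg.2 hl.le))).congr
      fun x _ ↦ ?_
    have hsq : x 0 ^ 2 = ‖x‖ ^ 2 - x 1 ^ 2 := by
      simp [EuclideanSpace.real_norm_sq_eq, Fin.sum_univ_two]
    simp only [Pi.add_apply, smul_eq_mul, hsq]
    rcases eq_or_ne ‖x‖ 0 with h0 | h0
    · simp [h0]
    · field_simp
      ring
end

section
/- Let λ ∈ [-1/2, 1] and γ > 0. Define ĝ : ℝ³ × ℝ³ → [0,∞) by ĝ(v,p) = γ(|p||v|² + λ(v·p)²/|p|) for p ≠ 0 and ĝ(v,0) = 0. Then for every fixed v ∈ ℝ³, the map p ↦ ĝ(v,p) is convex and positively one-homogeneous on ℝ³. -/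
open scoped RealInnerProductSpace
open Set

/-!
For `t > 0` one has `2 c x - c² t ≤ x² / t`, with equality at `c = x / t`. Hence
`α ‖p‖ + β x(p)² / ‖p‖` is the pointwise maximum over `c ∈ [0, K]` of
`(α - β c²) ‖p‖ + 2 β c x(p)`, and each of these is convex as soon as `x` is convex and
nonnegative, `β ≥ 0`, `x(p) ≤ K ‖p‖` and `β K² ≤ α`.
For `λ ≥ 0` take `x(p) = |⟪v, p⟫|`, so that `β K² ≤ α` is `λ ≤ 1`. For `λ < 0` write
`⟪v, p⟫² = ‖v‖² (‖p‖² - ‖p⊥‖²)` with `p⊥` the component of `p` orthogonal to `v`, and take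
`x(p) = ‖p⊥‖`; now `β K² ≤ α` is `λ ≥ -1/2`.
-/

theorem convexOn_of_isGreatest {𝕜 E β ι : Type*} [Semiring 𝕜] [PartialOrder 𝕜] [AddCommMonoid E]
    [AddCommMonoid β] [PartialOrder β] [IsOrderedAddMonoid β] [SMul 𝕜 E] [Module 𝕜 β]
    [PosSMulMono 𝕜 β] {s : Set E} {f : E → β} {g : ι → E → β}
    (hs : Convex 𝕜 s) (hg : ∀ i, ConvexOn 𝕜 s (g i))
    (hf : ∀ x ∈ s, IsGreatest (range (g · x)) (f x)) : ConvexOn 𝕜 s f := by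
  refine ⟨hs, fun x hx y hy a b ha hb hab => ?_⟩
  obtain ⟨⟨i, hi⟩, -⟩ := hf _ (hs hx hy ha hb hab)
  calc f (a • x + b • y) = g i (a • x + b • y) := hi.symm
    _ ≤ a • g i x + b • g i y := (hg i).2 hx hy ha hb hab
    _ ≤ a • f x + b • f y := by
      gcongr
      · exact (hf x hx).2 ⟨i, rfl⟩
      · exact (hf y hy).2 ⟨i, rfl⟩

theorem two_mul_mul_sub_sq_mul_le_sq_div {t : ℝ} (ht : 0 < t) (c x : ℝ) :
    2 * c * x - c ^ 2 * t ≤ x ^ 2 / t := by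
  have key : x ^ 2 / t - (2 * c * x - c ^ 2 * t) = (x - c * t) ^ 2 / t := by
    field_simp; ring
  linarith [div_nonneg (sq_nonneg (x - c * t)) ht.le]

section Perspective
variable {E : Type*} [NormedAddCommGroup E] [NormedSpace ℝ E]

theorem convexOn_mul_norm_add_mul_sq_div_norm {x : E → ℝ} {α β K : ℝ}
    (hx : ConvexOn ℝ univ x) (hx0 : ∀ p, 0 ≤ x p) (hxK : ∀ p, x p ≤ K * ‖p‖) (hβ : 0 ≤ β)
    (hK : β * K ^ 2 ≤ α) :
    ConvexOn ℝ univ (fun p => α * ‖p‖ + β * x p ^ 2 / ‖p‖) := by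
  let g (c : {c : ℝ // 0 ≤ c ∧ β * c ^ 2 ≤ α}) (p : E) : ℝ :=
    (α - β * c ^ 2) * ‖p‖ + 2 * β * c * x p
  refine convexOn_of_isGreatest convex_univ (g := g) (fun ⟨c, hc0, hcα⟩ => ?_) fun p _ => ?_
  · exact ((convexOn_norm convex_univ).smul (sub_nonneg.2 hcα)).add (hx.smul (by positivity))
  rcases eq_or_ne p 0 with rfl | hp
  · have hx0' : x 0 = 0 := le_antisymm (by simpa using hxK 0) (hx0 0)
    have hα : 0 ≤ α := (mul_nonneg hβ (sq_nonneg K)).trans hK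
    refine ⟨⟨⟨0, le_rfl, by simpa using hα⟩, by simp [g, hx0']⟩, ?_⟩
    rintro _ ⟨c, rfl⟩
    simp [g, hx0']
  have hp' : 0 < ‖p‖ := norm_pos_iff.2 hp
  have hcK : x p / ‖p‖ ≤ K := (div_le_iff₀ hp').2 (hxK p)
  have hc0 : 0 ≤ x p / ‖p‖ := div_nonneg (hx0 p) hp'.le
  refine ⟨⟨⟨x p / ‖p‖, hc0, ?_⟩, ?_⟩, ?_⟩
  · exact (mul_le_mul_of_nonneg_left (pow_le_pow_left₀ hc0 hcK 2) hβ).trans hK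
  · simp only [g]
    field_simp
    ring
  · rintro _ ⟨⟨c, -⟩, rfl⟩
    have := mul_le_mul_of_nonneg_left (two_mul_mul_sub_sq_mul_le_sq_div hp' c (x p)) hβ
    simp only [g]
    linarith [mul_div_assoc β (x p ^ 2) ‖p‖]

end Perspective

section InnerProduct
variable {E : Type*} [NormedAddCommGroup E] [InnerProductSpace ℝ E]

theorem sq_inner_eq_sq_norm_mul_sq_norm_starProjection (v p : E) :
    ⟪v, p⟫ ^ 2 = ‖v‖ ^ 2 * ‖(ℝ ∙ v).starProjection p‖ ^ 2 := by
  rw [Submodule.starProjection_singleton, norm_smul, Real.norm_eq_abs]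
  rcases eq_or_ne v 0 with rfl | hv
  · simp
  · have := norm_ne_zero_iff.2 hv
    rw [RCLike.ofReal_real_eq_id, id, mul_pow, sq_abs, div_pow]
    field_simp

/-- `ĝ(v, p) / γ`; at `p = 0` it is `0` because `x / 0 = 0`. -/
noncomputable def ghat (l : ℝ) (v p : E) : ℝ :=
  ‖p‖ * ‖v‖ ^ 2 + l * ⟪v, p⟫ ^ 2 / ‖p‖

theorem ghat_smul (l : ℝ) (v : E) {t : ℝ} (ht : 0 ≤ t) (p : E) :
    ghat l v (t • p) = t * ghat l v p := by
  simp only [ghat, norm_smul, real_inner_smul_right, Real.norm_eq_abs, abs_of_nonneg ht]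
  rcases eq_or_ne p 0 with rfl | hp
  · simp
  rcases ht.eq_or_lt with rfl | ht
  · simp
  have := norm_ne_zero_iff.2 hp
  field_simp

theorem convexOn_ghat_of_nonneg {l : ℝ} (hl0 : 0 ≤ l) (hl1 : l ≤ 1) (v : E) :
    ConvexOn ℝ univ (ghat l v) := by
  have hx : ConvexOn ℝ univ fun p => |⟪v, p⟫| :=
    (convexOn_norm convex_univ).comp_linearMap (innerₛₗ ℝ v)
  refine (convexOn_mul_norm_add_mul_sq_div_norm (α := ‖v‖ ^ 2) hx (fun _ => abs_nonneg _)
    (abs_real_inner_le_norm v) hl0 ?_).congr fun p _ => ?_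
  · nlinarith [sq_nonneg ‖v‖]
  · simp only [ghat, sq_abs]
    ring

theorem convexOn_ghat_of_nonpos {l : ℝ} (hl : -(1 / 2) ≤ l) (hl0 : l ≤ 0) (v : E) :
    ConvexOn ℝ univ (ghat l v) := by
  have hx : ConvexOn ℝ univ fun p => ‖(ℝ ∙ v)ᗮ.starProjection p‖ :=
    (convexOn_norm convex_univ).comp_linearMap ((ℝ ∙ v)ᗮ.starProjection : E →ₗ[ℝ] E)
  have hxK (p : E) : ‖(ℝ ∙ v)ᗮ.starProjection p‖ ≤ 1 * ‖p‖ := by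
    simpa using (ℝ ∙ v)ᗮ.norm_starProjection_apply_le p
  refine (convexOn_mul_norm_add_mul_sq_div_norm (α := (1 + l) * ‖v‖ ^ 2) (β := -l * ‖v‖ ^ 2)
    hx (fun _ => norm_nonneg _) hxK (mul_nonneg (neg_nonneg.2 hl0) (sq_nonneg _))
    (by nlinarith [sq_nonneg ‖v‖])).congr fun p _ => ?_
  have hpyth := (ℝ ∙ v).norm_sq_eq_add_norm_sq_starProjection p
  simp only [ghat, sq_inner_eq_sq_norm_mul_sq_norm_starProjection v p]
  rcases eq_or_ne p 0 with rfl | hp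
  · simp
  have := norm_ne_zero_iff.2 hp
  field_simp
  linear_combination (l * ‖v‖ ^ 2) * hpyth

theorem convexOn_ghat {l : ℝ} (hl1 : -(1 / 2) ≤ l) (hl2 : l ≤ 1) (v : E) :
    ConvexOn ℝ univ (ghat l v) :=
  (le_total 0 l).elim (convexOn_ghat_of_nonneg · hl2 v) (convexOn_ghat_of_nonpos hl1 · v)

end InnerProduct

/-- For λ ∈ [-1/2,1], γ > 0, the extended surface energy density
ĝ(v,p) = γ(|p||v|² + λ(v·p)²/|p|) (with ĝ(v,0) = 0; the formula below yields 0
at p = 0 since division by zero is 0) is, for every fixed v, convex and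
positively one-homogeneous in p. -/
theorem ghat_convex_and_one_homogeneous (γ l : ℝ) (hγ : 0 < γ)
    (hl1 : -(1/2) ≤ l) (hl2 : l ≤ 1) (v : EuclideanSpace ℝ (Fin 3)) :
    ConvexOn ℝ Set.univ (fun p : EuclideanSpace ℝ (Fin 3) =>
        γ * (‖p‖ * ‖v‖^2 + l * ⟪v, p⟫^2 / ‖p‖)) ∧
    ∀ t : ℝ, 0 < t → ∀ p : EuclideanSpace ℝ (Fin 3),
      γ * (‖t • p‖ * ‖v‖^2 + l * ⟪v, t • p⟫^2 / ‖t • p‖)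
        = t * (γ * (‖p‖ * ‖v‖^2 + l * ⟪v, p⟫^2 / ‖p‖)) := by
  refine ⟨(convexOn_ghat hl1 hl2 v).smul hγ.le, fun t ht p => ?_⟩
  change γ * ghat l v (t • p) = t * (γ * ghat l v p)
  rw [ghat_smul l v ht.le]
  ring
end

section
/- Let e ∈ ℝ³ be a unit vector and λ ∈ [-1/2,1]. For any two-dimensional linear subspace V₂ ⊆ ℝ³, the restriction to V₂ of the map p ↦ |p| + λ(e·p)²/|p| (extended by 0 at p=0) is convex. In particular, if e₁ is the orthogonal projection of e onto V₂, then for p ∈ V₂, p ≠ 0, one has |p| + λ(e·p)²/|p| = |p| + λ|e₁|²((e₁/|e₁|)·p)²/|p| when e₁ ≠ 0. -/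
/-!
For `λ ≥ 0` and for `λ < 0` alike, `p ↦ |p| + λ (e·p)² / |p|` is a seminorm on the whole space,
hence convex everywhere and in particular on `V₂`. Both cases have the shape
`|p| + μ N(p)² / |p|` with `N` a seminorm dominated by `|·|` and `μ ∈ [0, 1]`; such a function is
subadditive by Sedrakyan's inequality `(t + s)² / (r + w) ≤ t² / r + s² / w` together with the
monotonicity of `n ↦ n + μ c² / n` on `n ≥ c`. For `λ ≥ 0` take `N(p) = |e·p|` and `μ = λ`. For
`λ < 0` let `N(p)` be the length of the component of `p` orthogonal to `e`, so that
`(e·p)² = |p|² - N(p)²` and the function equals `(1 + λ)(|p| + μ N(p)² / |p|)` with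
`μ = -λ / (1 + λ)`, which is at most `1` exactly when `λ ≥ -1/2`.
The identity on `V₂` holds because `e - e₁` is orthogonal to `V₂`.
-/

open scoped RealInnerProductSpace
open Set

theorem add_mul_sq_div_le_add_mul_sq_div {μ c n m : ℝ} (hμ : μ ≤ 1) (hc : 0 ≤ c)
    (hcn : c ≤ n) (hnm : n ≤ m) : n + μ * c ^ 2 / n ≤ m + μ * c ^ 2 / m := by
  rcases (hc.trans hcn).eq_or_lt with rfl | hn
  · obtain rfl : c = 0 := le_antisymm hcn hc
    simpa using hnm
  have hm : 0 < m := hn.trans_le hnm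
  have hμc : μ * c ^ 2 ≤ n * m :=
    calc μ * c ^ 2 ≤ 1 * c ^ 2 := mul_le_mul_of_nonneg_right hμ (sq_nonneg c)
      _ ≤ n * m := by rw [one_mul, sq]; exact mul_le_mul hcn (hcn.trans hnm) hc hn.le
  have hdiff : m + μ * c ^ 2 / m - (n + μ * c ^ 2 / n) =
      (m - n) * (n * m - μ * c ^ 2) / (n * m) := by
    field_simp
    ring
  rw [← sub_nonneg, hdiff]
  exact div_nonneg (mul_nonneg (sub_nonneg.2 hnm) (sub_nonneg.2 hμc)) (by positivity)

theorem add_sq_div_add_le_s4 {t s r w : ℝ} (hr : 0 < r) (hw : 0 < w) :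
    (t + s) ^ 2 / (r + w) ≤ t ^ 2 / r + s ^ 2 / w := by
  simpa [Fin.sum_univ_two] using Finset.sq_sum_div_le_sum_sq_div Finset.univ ![t, s]
    (g := ![r, w]) (by simp [Fin.forall_fin_two, hr, hw])

namespace Seminorm

variable {E : Type*} [NormedAddCommGroup E] [NormedSpace ℝ E]

theorem norm_add_mul_sq_div_add_le (N : Seminorm ℝ E) (hN : ∀ x, N x ≤ ‖x‖) {μ : ℝ}
    (hμ₀ : 0 ≤ μ) (hμ₁ : μ ≤ 1) (x y : E) :
    ‖x + y‖ + μ * N (x + y) ^ 2 / ‖x + y‖ ≤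
      (‖x‖ + μ * N x ^ 2 / ‖x‖) + (‖y‖ + μ * N y ^ 2 / ‖y‖) := by
  rcases eq_or_ne x 0 with rfl | hx
  · simp
  rcases eq_or_ne y 0 with rfl | hy
  · simp
  have hx' : 0 < ‖x‖ := norm_pos_iff.2 hx
  have hy' : 0 < ‖y‖ := norm_pos_iff.2 hy
  have hsed : μ * ((N x + N y) ^ 2 / (‖x‖ + ‖y‖)) ≤ μ * (N x ^ 2 / ‖x‖ + N y ^ 2 / ‖y‖) :=
    mul_le_mul_of_nonneg_left (add_sq_div_add_le_s4 hx' hy') hμ₀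
  calc ‖x + y‖ + μ * N (x + y) ^ 2 / ‖x + y‖
      ≤ (‖x‖ + ‖y‖) + μ * N (x + y) ^ 2 / (‖x‖ + ‖y‖) :=
        add_mul_sq_div_le_add_mul_sq_div hμ₁ (apply_nonneg N _) (hN _) (norm_add_le x y)
    _ ≤ (‖x‖ + ‖y‖) + μ * (N x + N y) ^ 2 / (‖x‖ + ‖y‖) := by
        gcongr
        exact map_add_le_add N x y
    _ ≤ (‖x‖ + μ * N x ^ 2 / ‖x‖) + (‖y‖ + μ * N y ^ 2 / ‖y‖) := by
        simp only [mul_div_assoc] at hsed ⊢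
        linarith

theorem norm_smul_add_mul_sq_div (N : Seminorm ℝ E) (μ a : ℝ) (x : E) :
    ‖a • x‖ + μ * N (a • x) ^ 2 / ‖a • x‖ = ‖a‖ * (‖x‖ + μ * N x ^ 2 / ‖x‖) := by
  rw [norm_smul, map_smul_eq_mul]
  rcases eq_or_ne ‖a‖ 0 with ha | ha
  · simp [ha]
  rcases eq_or_ne ‖x‖ 0 with hx | hx
  · simp [hx]
  field_simp

theorem convexOn_norm_add_mul_sq_div (N : Seminorm ℝ E) (hN : ∀ x, N x ≤ ‖x‖) {μ : ℝ}
    (hμ₀ : 0 ≤ μ) (hμ₁ : μ ≤ 1) :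
    ConvexOn ℝ univ (fun x => ‖x‖ + μ * N x ^ 2 / ‖x‖) :=
  (Seminorm.of _ (norm_add_mul_sq_div_add_le N hN hμ₀ hμ₁)
    (norm_smul_add_mul_sq_div N μ)).convexOn

end Seminorm

section InnerProductSpace

variable {E : Type*} [NormedAddCommGroup E] [InnerProductSpace ℝ E]

theorem convexOn_norm_add_mul_inner_sq_div_of_nonneg {e : E} (he : ‖e‖ ≤ 1) {l : ℝ}
    (hl₀ : 0 ≤ l) (hl₁ : l ≤ 1) :
    ConvexOn ℝ univ (fun p => ‖p‖ + l * ⟪e, p⟫ ^ 2 / ‖p‖) := by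
  let N : Seminorm ℝ E := (normSeminorm ℝ ℝ).comp (innerₛₗ ℝ e)
  have hN (p : E) : N p = |⟪e, p⟫| := rfl
  have hNle (p : E) : N p ≤ ‖p‖ :=
    calc N p ≤ ‖e‖ * ‖p‖ := abs_real_inner_le_norm e p
      _ ≤ ‖p‖ := mul_le_of_le_one_left (norm_nonneg p) he
  simpa only [hN, sq_abs] using N.convexOn_norm_add_mul_sq_div hNle hl₀ hl₁

theorem norm_starProjection_orthogonal_singleton_sq {e : E} (he : ‖e‖ = 1) (p : E) :
    ‖(ℝ ∙ e)ᗮ.starProjection p‖ ^ 2 = ‖p‖ ^ 2 - ⟪e, p⟫ ^ 2 := by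
  rw [(ℝ ∙ e).norm_sq_eq_add_norm_sq_starProjection p, Submodule.starProjection_singleton,
    norm_smul, he]
  simp

theorem convexOn_norm_add_mul_inner_sq_div_of_nonpos {e : E} (he : ‖e‖ = 1) {l : ℝ}
    (hl₀ : -(1 / 2) ≤ l) (hl₁ : l ≤ 0) :
    ConvexOn ℝ univ (fun p => ‖p‖ + l * ⟪e, p⟫ ^ 2 / ‖p‖) := by
  let N : Seminorm ℝ E := (normSeminorm ℝ E).comp (ℝ ∙ e)ᗮ.starProjection.toLinearMap
  have hN (p : E) : N p ^ 2 = ‖p‖ ^ 2 - ⟪e, p⟫ ^ 2 :=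
    norm_starProjection_orthogonal_singleton_sq he p
  have hNle (p : E) : N p ≤ ‖p‖ := (ℝ ∙ e)ᗮ.norm_starProjection_apply_le p
  have hl : 0 < 1 + l := by linarith
  have hμ₀ : 0 ≤ -l / (1 + l) := div_nonneg (neg_nonneg.2 hl₁) hl.le
  have hμ₁ : -l / (1 + l) ≤ 1 := by rw [div_le_one hl]; linarith
  refine ((N.convexOn_norm_add_mul_sq_div hNle hμ₀ hμ₁).smul hl.le).congr fun p _ => ?_
  simp only [smul_eq_mul, hN]
  rcases eq_or_ne ‖p‖ 0 with hp | hp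
  · simp [hp]
  field_simp
  ring

theorem convexOn_norm_add_mul_inner_sq_div {e : E} (he : ‖e‖ = 1) {l : ℝ}
    (hl₀ : -(1 / 2) ≤ l) (hl₁ : l ≤ 1) :
    ConvexOn ℝ univ (fun p => ‖p‖ + l * ⟪e, p⟫ ^ 2 / ‖p‖) := by
  rcases le_total 0 l with hl | hl
  · exact convexOn_norm_add_mul_inner_sq_div_of_nonneg he.le hl hl₁
  · exact convexOn_norm_add_mul_inner_sq_div_of_nonpos he hl₀ hl

end InnerProductSpace

theorem restriction_convex_on_plane_general (l : ℝ) (hl1 : -(1/2) ≤ l) (hl2 : l ≤ 1)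
    (e : EuclideanSpace ℝ (Fin 3)) (he : ‖e‖ = 1)
    (V : Submodule ℝ (EuclideanSpace ℝ (Fin 3))) :
    ConvexOn ℝ (V : Set (EuclideanSpace ℝ (Fin 3)))
      (fun p : EuclideanSpace ℝ (Fin 3) => ‖p‖ + l * ⟪e, p⟫^2 / ‖p‖) ∧
    ∀ p : EuclideanSpace ℝ (Fin 3), p ∈ V → p ≠ 0 →
      ∀ e₁ : EuclideanSpace ℝ (Fin 3),
        e₁ = (V.orthogonalProjection e : EuclideanSpace ℝ (Fin 3)) → e₁ ≠ 0 →
        ‖p‖ + l * ⟪e, p⟫^2 / ‖p‖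
          = ‖p‖ + l * ‖e₁‖^2 * ⟪‖e₁‖⁻¹ • e₁, p⟫^2 / ‖p‖ := by
  refine ⟨(convexOn_norm_add_mul_inner_sq_div he hl1 hl2).subset (subset_univ _) V.convex, ?_⟩
  rintro p hp - e₁ he₁e he₁
  have hinner : ⟪e, p⟫ = ⟪e₁, p⟫ := by
    rw [he₁e]
    exact (V.inner_orthogonalProjectionOnto_eq_of_mem_right ⟨p, hp⟩ e).symm
  have hne : ‖e₁‖ ≠ 0 := norm_ne_zero_iff.2 he₁
  rw [hinner, real_inner_smul_left]
  field_simp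

/-- For a unit vector e ∈ ℝ³ and λ ∈ [-1/2,1], the restriction to any
two-dimensional subspace V₂ of p ↦ |p| + λ(e·p)²/|p| (extended by 0 at p = 0;
the formula yields 0 there since division by zero is 0) is convex; moreover for
p ∈ V₂, p ≠ 0, and e₁ ≠ 0 the orthogonal projection of e on V₂,
|p| + λ(e·p)²/|p| = |p| + λ|e₁|²((e₁/|e₁|)·p)²/|p|. -/
theorem restriction_convex_on_plane (l : ℝ) (hl1 : -(1/2) ≤ l) (hl2 : l ≤ 1)
    (e : EuclideanSpace ℝ (Fin 3)) (he : ‖e‖ = 1)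
    (V : Submodule ℝ (EuclideanSpace ℝ (Fin 3))) (hV : Module.finrank ℝ V = 2) :
    ConvexOn ℝ (V : Set (EuclideanSpace ℝ (Fin 3)))
      (fun p : EuclideanSpace ℝ (Fin 3) => ‖p‖ + l * ⟪e, p⟫^2 / ‖p‖) ∧
    ∀ p : EuclideanSpace ℝ (Fin 3), p ∈ V → p ≠ 0 →
      ∀ e₁ : EuclideanSpace ℝ (Fin 3),
        e₁ = (V.orthogonalProjection e : EuclideanSpace ℝ (Fin 3)) → e₁ ≠ 0 →
        ‖p‖ + l * ⟪e, p⟫^2 / ‖p‖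
          = ‖p‖ + l * ‖e₁‖^2 * ⟪‖e₁‖⁻¹ • e₁, p⟫^2 / ‖p‖ :=
  restriction_convex_on_plane_general l hl1 hl2 e he V
end
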